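/- arXiv:1706.02435 — 3 statements merged into one kernel-verified Lean document; each statement's English description precedes it below -/
import Mathlib

section
/- Let (λ_n)_{n≥1} be a sequence of nonnegative real numbers, let 0 < γ_min < γ*_min, and let N* ≥ 1 be an integer, with √λ_{n+1} − √λ_n ≥ γ_min for all n ≥ 1 and √λ_{n+1} − √λ_n ≥ γ*_min for all n ≥ N*. Let n < N* and ρ > 0. If λ_n ≤ λ_{N*} − λ_n, then: N_n(ρ) ≤ 2√ρ/γ_min if ρ ≤ λ_n; N_n(ρ) ≤ n − 1 + √ρ/γ_min if λ_n ≤ ρ ≤ λ_{N*} − λ_n; and N_n(ρ) ≤ N* − 1 + √ρ/γ*_min if ρ ≥ λ_{N*} − λ_n. If λ_n ≥ λ_{N*} − λ_n, then: N_n(ρ) ≤ 2√ρ/γ_min if ρ ≤ λ_{N*} − λ_n; N_n(ρ) ≤ N* − n + √ρ/γ_min + √ρ/γ*_min if λ_{N*} − λ_n ≤ ρ ≤ λ_n; and N_n(ρ) ≤ N* − 1 + √ρ/γ*_min if ρ ≥ λ_n. -/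
/-- The counting function `N_n(ρ) = card { k ≥ 1 : 0 < |λ_n - λ_k| ≤ ρ }`. -/
noncomputable def countingFn (lam : ℕ → ℝ) (n : ℕ) (ρ : ℝ) : ℕ :=
  Set.ncard {k : ℕ | 1 ≤ k ∧ 0 < |lam n - lam k| ∧ |lam n - lam k| ≤ ρ}

private lemma sqrt_sub_le' (a b : ℝ) (hb : 0 ≤ b) (hba : b ≤ a) :
    Real.sqrt a - Real.sqrt b ≤ Real.sqrt (a - b) := by
  have h5 : Real.sqrt a ≤ Real.sqrt (a - b) + Real.sqrt b := by
    rw [Real.sqrt_le_iff]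
    constructor
    · positivity
    · have h1 := Real.sq_sqrt hb
      have h2 := Real.sq_sqrt (sub_nonneg.2 hba)
      nlinarith [Real.sqrt_nonneg b, Real.sqrt_nonneg (a - b)]
  linarith

private lemma gap_accum (f : ℕ → ℝ) (γ : ℝ) (m : ℕ) (h : ∀ i, m ≤ i → γ ≤ f (i+1) - f i) :
    ∀ j k, m ≤ j → j ≤ k → ((k:ℝ) - (j:ℝ)) * γ ≤ f k - f j := by
  intro j k hmj hjk
  induction k, hjk using Nat.le_induction with
  | base => simp
  | succ k hk ih =>
    have h2 := h k (le_trans hmj hk)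
    push_cast
    nlinarith [ih]

private lemma count_split (lam : ℕ → ℝ) (n : ℕ) (ρ : ℝ) (F1 F2 : Finset ℕ)
    (h1 : ∀ k, 1 ≤ k → k < n → 0 < |lam n - lam k| → |lam n - lam k| ≤ ρ → k ∈ F1)
    (h2 : ∀ k, 1 ≤ k → n < k → 0 < |lam n - lam k| → |lam n - lam k| ≤ ρ → k ∈ F2) :
    countingFn lam n ρ ≤ F1.card + F2.card := by
  have hsub : {k : ℕ | 1 ≤ k ∧ 0 < |lam n - lam k| ∧ |lam n - lam k| ≤ ρ} ⊆ ↑(F1 ∪ F2) := by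
    rintro k ⟨hk1, hkpos, hkρ⟩
    rcases lt_trichotomy k n with h | h | h
    · exact Finset.mem_coe.2 (Finset.mem_union_left _ (h1 k hk1 h hkpos hkρ))
    · subst h; simp at hkpos
    · exact Finset.mem_coe.2 (Finset.mem_union_right _ (h2 k hk1 h hkpos hkρ))
  calc countingFn lam n ρ ≤ (↑(F1 ∪ F2) : Set ℕ).ncard :=
        Set.ncard_le_ncard hsub (Finset.finite_toSet _)
    _ = (F1 ∪ F2).card := Set.ncard_coe_finset _
    _ ≤ F1.card + F2.card := Finset.card_union_le _ _

theorem counting_bound_below_Nstar (lam : ℕ → ℝ) (γmin γmin' : ℝ) (Ns : ℕ)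
    (hγ : 0 < γmin) (hγγ : γmin < γmin') (hNs : 1 ≤ Ns)
    (hpos : ∀ n, 1 ≤ n → 0 ≤ lam n)
    (hgap : ∀ n, 1 ≤ n → γmin ≤ Real.sqrt (lam (n + 1)) - Real.sqrt (lam n))
    (hgap' : ∀ n, Ns ≤ n → γmin' ≤ Real.sqrt (lam (n + 1)) - Real.sqrt (lam n)) :
    ∀ n, 1 ≤ n → n < Ns → ∀ ρ : ℝ, 0 < ρ →
      (lam n ≤ lam Ns - lam n →
        ((ρ ≤ lam n → (countingFn lam n ρ : ℝ) ≤ 2 * Real.sqrt ρ / γmin) ∧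
         (lam n ≤ ρ → ρ ≤ lam Ns - lam n →
           (countingFn lam n ρ : ℝ) ≤ (n : ℝ) - 1 + Real.sqrt ρ / γmin) ∧
         (lam Ns - lam n ≤ ρ →
           (countingFn lam n ρ : ℝ) ≤ (Ns : ℝ) - 1 + Real.sqrt ρ / γmin'))) ∧
      (lam Ns - lam n ≤ lam n →
        ((ρ ≤ lam Ns - lam n → (countingFn lam n ρ : ℝ) ≤ 2 * Real.sqrt ρ / γmin) ∧
         (lam Ns - lam n ≤ ρ → ρ ≤ lam n →
           (countingFn lam n ρ : ℝ) ≤ (Ns : ℝ) - n + Real.sqrt ρ / γmin + Real.sqrt ρ / γmin') ∧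
         (lam n ≤ ρ →
           (countingFn lam n ρ : ℝ) ≤ (Ns : ℝ) - 1 + Real.sqrt ρ / γmin'))) := by
  intro n hn1 hnNs ρ hρ
  set μ : ℕ → ℝ := fun k => Real.sqrt (lam k) with hμ
  have hγ' : (0:ℝ) < γmin' := lt_trans hγ hγγ
  have hacc : ∀ j k : ℕ, 1 ≤ j → j ≤ k → ((k:ℝ) - (j:ℝ)) * γmin ≤ μ k - μ j :=
    gap_accum μ γmin 1 (fun i hi => hgap i hi)
  have hacc' : ∀ j k : ℕ, Ns ≤ j → j ≤ k → ((k:ℝ) - (j:ℝ)) * γmin' ≤ μ k - μ j :=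
    gap_accum μ γmin' Ns (fun i hi => hgap' i hi)
  -- strict monotonicity of lam on [1, ∞)
  have hlamlt : ∀ j k, 1 ≤ j → j < k → lam j < lam k := by
    intro j k hj hjk
    have h1 := hacc j k hj (le_of_lt hjk)
    have h2 : (0:ℝ) < ((k:ℝ) - (j:ℝ)) * γmin := by
      have : (j:ℝ) < (k:ℝ) := by exact_mod_cast hjk
      exact mul_pos (by linarith) hγ
    have hμj : 0 ≤ μ j := Real.sqrt_nonneg _
    have hjlt : μ j < μ k := by linarith
    have := Real.sq_sqrt (hpos j hj)
    have := Real.sq_sqrt (hpos k (le_trans hj (le_of_lt hjk)))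
    nlinarith
  have hlamn0 : 0 ≤ lam n := hpos n hn1
  have hlamNs0 : 0 ≤ lam Ns := hpos Ns hNs
  have hlamnNs : lam n < lam Ns := hlamlt n Ns hn1 hnNs
  set t : ℕ := ⌊Real.sqrt ρ / γmin⌋₊ with ht
  set t' : ℕ := ⌊Real.sqrt ρ / γmin'⌋₊ with ht'
  have htle : (t:ℝ) ≤ Real.sqrt ρ / γmin := Nat.floor_le (by positivity)
  have ht'le : (t':ℝ) ≤ Real.sqrt ρ / γmin' := Nat.floor_le (by positivity)
  -- lower part, when ρ ≤ lam n
  have hlow : ρ ≤ lam n → ∀ k, 1 ≤ k → k < n → 0 < |lam n - lam k| →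
      |lam n - lam k| ≤ ρ → k ∈ Finset.Ico (n - t) n := by
    intro hρn k hk1 hkn _ habs
    have hlt : lam k < lam n := hlamlt k n hk1 hkn
    rw [abs_of_pos (by linarith)] at habs
    have h1 : lam n - ρ ≤ lam k := by linarith
    have h2 : Real.sqrt (lam n - ρ) ≤ μ k := Real.sqrt_le_sqrt h1
    have h3 : μ n - Real.sqrt (lam n - ρ) ≤ Real.sqrt ρ := by
      have := sqrt_sub_le' (lam n) (lam n - ρ) (by linarith) (by linarith)
      simpa using this
    have h4 := hacc k n hk1 (le_of_lt hkn)
    have h5 : ((n:ℝ) - (k:ℝ)) * γmin ≤ Real.sqrt ρ := by linarith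
    have h6 : ((n - k : ℕ) : ℝ) ≤ Real.sqrt ρ / γmin := by
      rw [le_div_iff₀ hγ]
      have : ((n - k : ℕ) : ℝ) = (n:ℝ) - (k:ℝ) := by
        push_cast [Nat.cast_sub (le_of_lt hkn)]; ring
      rw [this]; exact h5
    have h7 : n - k ≤ t := Nat.le_floor h6
    exact Finset.mem_Ico.2 ⟨by omega, hkn⟩
  -- lower part, always
  have hlow' : ∀ k, 1 ≤ k → k < n → 0 < |lam n - lam k| →
      |lam n - lam k| ≤ ρ → k ∈ Finset.Ico 1 n := fun k hk1 hkn _ _ =>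
    Finset.mem_Ico.2 ⟨hk1, hkn⟩
  -- upper part, when ρ ≤ lam Ns - lam n
  have hhigh : ρ ≤ lam Ns - lam n → ∀ k, 1 ≤ k → n < k → 0 < |lam n - lam k| →
      |lam n - lam k| ≤ ρ → k ∈ Finset.Ioc n (n + t) := by
    intro hρNs k _ hnk _ habs
    have hlt : lam n < lam k := hlamlt n k hn1 hnk
    rw [abs_sub_comm, abs_of_pos (by linarith)] at habs
    have h2 : μ k ≤ Real.sqrt (lam n + ρ) := Real.sqrt_le_sqrt (by linarith)
    have h3 : Real.sqrt (lam n + ρ) - μ n ≤ Real.sqrt ρ := by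
      have := sqrt_sub_le' (lam n + ρ) (lam n) hlamn0 (by linarith)
      simpa using this
    have h4 := hacc n k hn1 (le_of_lt hnk)
    have h5 : ((k:ℝ) - (n:ℝ)) * γmin ≤ Real.sqrt ρ := by linarith
    have h6 : ((k - n : ℕ) : ℝ) ≤ Real.sqrt ρ / γmin := by
      rw [le_div_iff₀ hγ]
      have : ((k - n : ℕ) : ℝ) = (k:ℝ) - (n:ℝ) := by
        push_cast [Nat.cast_sub (le_of_lt hnk)]; ring
      rw [this]; exact h5
    have h7 : k - n ≤ t := Nat.le_floor h6
    exact Finset.mem_Ioc.2 ⟨hnk, by omega⟩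
  -- upper part, when lam Ns - lam n ≤ ρ
  have hhigh' : lam Ns - lam n ≤ ρ → ∀ k, 1 ≤ k → n < k → 0 < |lam n - lam k| →
      |lam n - lam k| ≤ ρ → k ∈ Finset.Ioo n Ns ∪ Finset.Icc Ns (Ns + t') := by
    intro hρNs k _ hnk _ habs
    have hlt : lam n < lam k := hlamlt n k hn1 hnk
    rw [abs_sub_comm, abs_of_pos (by linarith)] at habs
    rcases lt_or_ge k Ns with hkNs | hkNs
    · exact Finset.mem_union_left _ (Finset.mem_Ioo.2 ⟨hnk, hkNs⟩)
    · have h2 : μ k ≤ Real.sqrt (lam n + ρ) := Real.sqrt_le_sqrt (by linarith)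
      have h3 : Real.sqrt (lam n + ρ) - μ Ns ≤ Real.sqrt ρ := by
        have h := sqrt_sub_le' (lam n + ρ) (lam Ns) hlamNs0 (by linarith)
        have h' : Real.sqrt (lam n + ρ - lam Ns) ≤ Real.sqrt ρ :=
          Real.sqrt_le_sqrt (by linarith)
        have : μ Ns = Real.sqrt (lam Ns) := rfl
        linarith
      have h4 := hacc' Ns k le_rfl hkNs
      have h5 : ((k:ℝ) - (Ns:ℝ)) * γmin' ≤ Real.sqrt ρ := by linarith
      have h6 : ((k - Ns : ℕ) : ℝ) ≤ Real.sqrt ρ / γmin' := by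
        rw [le_div_iff₀ hγ']
        have : ((k - Ns : ℕ) : ℝ) = (k:ℝ) - (Ns:ℝ) := by
          push_cast [Nat.cast_sub hkNs]; ring
        rw [this]; exact h5
      have h7 : k - Ns ≤ t' := Nat.le_floor h6
      exact Finset.mem_union_right _ (Finset.mem_Icc.2 ⟨hkNs, by omega⟩)
  -- card computations
  have hcard1 : (Finset.Ico (n - t) n).card ≤ t := by
    rw [Nat.card_Ico]; omega
  have hcard2 : (Finset.Ico 1 n).card = n - 1 := by rw [Nat.card_Ico]
  have hcard3 : (Finset.Ioc n (n + t)).card = t := by rw [Nat.card_Ioc]; omega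
  have hcard4 : (Finset.Ioo n Ns ∪ Finset.Icc Ns (Ns + t')).card ≤ Ns - n + t' := by
    calc (Finset.Ioo n Ns ∪ Finset.Icc Ns (Ns + t')).card
        ≤ (Finset.Ioo n Ns).card + (Finset.Icc Ns (Ns + t')).card := Finset.card_union_le _ _
      _ = (Ns - n - 1) + (t' + 1) := by rw [Nat.card_Ioo, Nat.card_Icc]; omega
      _ ≤ Ns - n + t' := by omega
  have hncast : (1:ℝ) ≤ (n:ℝ) := by exact_mod_cast hn1
  have hnNscast : (n:ℝ) < (Ns:ℝ) := by exact_mod_cast hnNs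
  -- generic conclusions
  have bound1 : ρ ≤ lam n → ρ ≤ lam Ns - lam n →
      (countingFn lam n ρ : ℝ) ≤ 2 * Real.sqrt ρ / γmin := by
    intro h1 h2
    have hc := count_split lam n ρ _ _ (hlow h1) (hhigh h2)
    have : (countingFn lam n ρ : ℝ) ≤ ((Finset.Ico (n - t) n).card : ℝ)
        + ((Finset.Ioc n (n + t)).card : ℝ) := by exact_mod_cast hc
    have hc1 : ((Finset.Ico (n - t) n).card : ℝ) ≤ (t:ℝ) := by exact_mod_cast hcard1
    have hc3 : ((Finset.Ioc n (n + t)).card : ℝ) = (t:ℝ) := by exact_mod_cast hcard3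
    rw [mul_div_assoc]
    linarith
  have bound3 : lam Ns - lam n ≤ ρ →
      (countingFn lam n ρ : ℝ) ≤ (Ns : ℝ) - 1 + Real.sqrt ρ / γmin' := by
    intro h1
    have hc := count_split lam n ρ _ _ hlow' (hhigh' h1)
    have hcc : (countingFn lam n ρ : ℝ) ≤ ((n - 1 : ℕ) : ℝ) + ((Ns - n + t' : ℕ) : ℝ) := by
      have : countingFn lam n ρ ≤ (n - 1) + (Ns - n + t') := by
        calc countingFn lam n ρ ≤ _ := hc
          _ ≤ (n - 1) + (Ns - n + t') := by rw [hcard2]; omega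
      exact_mod_cast this
    have e1 : ((n - 1 : ℕ) : ℝ) = (n:ℝ) - 1 := by
      push_cast [Nat.cast_sub hn1]; ring
    have e2 : ((Ns - n + t' : ℕ) : ℝ) = (Ns:ℝ) - (n:ℝ) + (t':ℝ) := by
      push_cast [Nat.cast_sub (le_of_lt hnNs)]; ring
    rw [e1, e2] at hcc
    linarith
  refine ⟨fun hAB => ⟨?_, fun h1 h2 => ?_, fun h1 => bound3 h1⟩,
          fun hAB => ⟨fun h1 => bound1 (by linarith) h1, fun h1 h2 => ?_, fun h1 => bound3 (by linarith)⟩⟩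
  · intro h1
    exact bound1 h1 (by linarith)
  · -- case A2: F1 = Ico 1 n, F2 = Ioc n (n+t)
    have hc := count_split lam n ρ _ _ hlow' (hhigh h2)
    have hcc : (countingFn lam n ρ : ℝ) ≤ ((n - 1 : ℕ) : ℝ) + ((t : ℕ) : ℝ) := by
      have : countingFn lam n ρ ≤ (n - 1) + t := by
        calc countingFn lam n ρ ≤ _ := hc
          _ = (n - 1) + t := by rw [hcard2, hcard3]
      exact_mod_cast this
    have e1 : ((n - 1 : ℕ) : ℝ) = (n:ℝ) - 1 := by push_cast [Nat.cast_sub hn1]; ring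
    rw [e1] at hcc
    linarith
  · -- case B2: F1 = Ico (n-t) n, F2 = Ioo n Ns ∪ Icc Ns (Ns+t')
    have hc := count_split lam n ρ _ _ (hlow h2) (hhigh' h1)
    have hcc : (countingFn lam n ρ : ℝ) ≤ ((t : ℕ) : ℝ) + ((Ns - n + t' : ℕ) : ℝ) := by
      have : countingFn lam n ρ ≤ t + (Ns - n + t') := by
        calc countingFn lam n ρ ≤ _ := hc
          _ ≤ t + (Ns - n + t') := by omega
      exact_mod_cast this
    have e2 : ((Ns - n + t' : ℕ) : ℝ) = (Ns:ℝ) - (n:ℝ) + (t':ℝ) := by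
      push_cast [Nat.cast_sub (le_of_lt hnNs)]; ring
    rw [e2] at hcc
    linarith
end

section
/- Let (λ_n)_{n≥1} be a sequence of nonnegative real numbers, let 0 < γ_min < γ*_min, and let N* ≥ 1 be an integer, with √λ_{n+1} − √λ_n ≥ γ_min for all n ≥ 1 and √λ_{n+1} − √λ_n ≥ γ*_min for all n ≥ N*. Set M* := (1 − γ_min/γ*_min)(N* − 1). Then for every n > N* and every ρ > 0: N_n(ρ) ≤ 2√ρ/γ*_min if ρ ≤ λ_n − λ_{N*}; N_n(ρ) ≤ √ρ/γ_min + √ρ/γ*_min if λ_n − λ_{N*} ≤ ρ ≤ λ_n; and N_n(ρ) ≤ M* + 2√ρ/γ*_min if ρ ≥ λ_n. -/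
lemma sqrt_subadd (a b : ℝ) (ha : 0 ≤ a) (hb : 0 ≤ b) :
    Real.sqrt (a + b) ≤ Real.sqrt a + Real.sqrt b := by
  nlinarith [Real.sq_sqrt ha, Real.sq_sqrt hb, Real.sq_sqrt (add_nonneg ha hb),
    Real.sqrt_nonneg a, Real.sqrt_nonneg b, Real.sqrt_nonneg (a + b),
    mul_nonneg (Real.sqrt_nonneg a) (Real.sqrt_nonneg b)]

lemma gap_sum (μ : ℕ → ℝ) (γ : ℝ) (m : ℕ) (h : ∀ k, m ≤ k → γ ≤ μ (k + 1) - μ k) :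
    ∀ a b, m ≤ a → a ≤ b → ((b : ℝ) - a) * γ ≤ μ b - μ a := by
  intro a b hma hab
  induction b, hab using Nat.le_induction with
  | base => simp
  | succ b hab ih =>
    have := h b (le_trans hma hab)
    push_cast
    push_cast at ih
    linarith

lemma ncard_le_of_bounds (n : ℕ) (S : Set ℕ) (L U : ℝ) (hL : 0 ≤ L) (hU : 0 ≤ U)
    (hn : n ∉ S) (h : ∀ k ∈ S, (n : ℝ) - L ≤ k ∧ (k : ℝ) ≤ n + U) :
    (S.ncard : ℝ) ≤ L + U := by
  have hsub : S ⊆ ↑((Finset.Icc (n - ⌊L⌋₊) (n + ⌊U⌋₊)).erase n) := by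
    intro k hk
    obtain ⟨h1, h2⟩ := h k hk
    simp only [Finset.coe_erase, Set.mem_diff, Finset.mem_coe, Finset.mem_Icc,
      Set.mem_singleton_iff]
    refine ⟨⟨?_, ?_⟩, fun hkn => hn (hkn ▸ hk)⟩
    · rcases le_or_gt n k with h' | h'
      · omega
      · have : ((n - k : ℕ) : ℝ) ≤ L := by
          push_cast [Nat.cast_sub h'.le]; linarith
        have := Nat.le_floor this
        omega
    · have : ((k - n : ℕ) : ℝ) ≤ U := by
        rcases le_or_gt k n with h' | h'
        · simp [Nat.sub_eq_zero_of_le h', hU]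
        · push_cast [Nat.cast_sub h'.le]; linarith
      have := Nat.le_floor this
      omega
  have h1 : S.ncard ≤ ((Finset.Icc (n - ⌊L⌋₊) (n + ⌊U⌋₊)).erase n).card := by
    rw [← Set.ncard_coe_finset]
    exact Set.ncard_le_ncard hsub (Finset.finite_toSet _)
  have h2 : ((Finset.Icc (n - ⌊L⌋₊) (n + ⌊U⌋₊)).erase n).card ≤ ⌊L⌋₊ + ⌊U⌋₊ := by
    have : ((Finset.Icc (n - ⌊L⌋₊) (n + ⌊U⌋₊)).erase n).card ≤
        (Finset.Icc (n - ⌊L⌋₊) (n + ⌊U⌋₊)).card - 1 := by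
      rw [Finset.card_erase_of_mem (Finset.mem_Icc.mpr (by omega))]
    rw [Nat.card_Icc] at this
    omega
  calc (S.ncard : ℝ) ≤ (⌊L⌋₊ + ⌊U⌋₊ : ℕ) := by exact_mod_cast h1.trans h2
    _ ≤ L + U := by push_cast; exact add_le_add (Nat.floor_le hL) (Nat.floor_le hU)

theorem counting_bound_above_Nstar_Mstar (lam : ℕ → ℝ) (γmin γmin' : ℝ) (Ns : ℕ)
    (hγ : 0 < γmin) (hγγ : γmin < γmin') (hNs : 1 ≤ Ns)
    (hpos : ∀ n, 1 ≤ n → 0 ≤ lam n)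
    (hgap : ∀ n, 1 ≤ n → γmin ≤ Real.sqrt (lam (n + 1)) - Real.sqrt (lam n))
    (hgap' : ∀ n, Ns ≤ n → γmin' ≤ Real.sqrt (lam (n + 1)) - Real.sqrt (lam n)) :
    ∀ n, Ns < n → ∀ ρ : ℝ, 0 < ρ →
      (ρ ≤ lam n - lam Ns →
        (countingFn lam n ρ : ℝ) ≤ 2 * Real.sqrt ρ / γmin') ∧
      (lam n - lam Ns ≤ ρ → ρ ≤ lam n →
        (countingFn lam n ρ : ℝ) ≤ Real.sqrt ρ / γmin + Real.sqrt ρ / γmin') ∧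
      (lam n ≤ ρ →
        (countingFn lam n ρ : ℝ) ≤
          (1 - γmin / γmin') * ((Ns : ℝ) - 1) + 2 * Real.sqrt ρ / γmin') := by
  intro n hn ρ hρ
  set μ : ℕ → ℝ := fun k => Real.sqrt (lam k) with hμdef
  have hγ' : 0 < γmin' := hγ.trans hγγ
  have hn1 : 1 ≤ n := le_trans hNs hn.le
  have gapA : ∀ a b : ℕ, 1 ≤ a → a ≤ b → ((b : ℝ) - a) * γmin ≤ μ b - μ a :=
    gap_sum μ γmin 1 hgap
  have gapB : ∀ a b, Ns ≤ a → a ≤ b → ((b : ℝ) - a) * γmin' ≤ μ b - μ a :=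
    gap_sum μ γmin' Ns hgap'
  have hμnn : ∀ k, 0 ≤ μ k := fun k => Real.sqrt_nonneg _
  -- strict monotonicity of lam on [1, ∞)
  have hmono : ∀ a b, 1 ≤ a → a < b → lam a < lam b := by
    intro a b ha hab
    have h1 : ((b : ℝ) - a) * γmin ≤ μ b - μ a := gapA a b ha hab.le
    have hba : (1 : ℝ) ≤ (b : ℝ) - a := by
      have : a + 1 ≤ b := hab
      push_cast [← Nat.cast_le (α := ℝ)] at this ⊢
      linarith
    have hμab : μ a < μ b := by nlinarith
    have e1 : lam a = μ a ^ 2 := (Real.sq_sqrt (hpos a ha)).symm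
    have e2 : lam b = μ b ^ 2 := (Real.sq_sqrt (hpos b (ha.trans hab.le))).symm
    rw [e1, e2]
    nlinarith [hμnn a, hμnn b]
  set s := Real.sqrt ρ with hsdef
  have hs : 0 < s := Real.sqrt_pos.mpr hρ
  -- √(lam m) ≤ √(lam k) + √(lam m - lam k)
  have key : ∀ k m : ℕ, 1 ≤ k → lam k ≤ lam m → μ m ≤ μ k + Real.sqrt (lam m - lam k) := by
    intro k m hk hkm
    have e : lam m = lam k + (lam m - lam k) := by ring
    calc μ m = Real.sqrt (lam k + (lam m - lam k)) := by rw [← e]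
      _ ≤ μ k + Real.sqrt (lam m - lam k) := sqrt_subadd _ _ (hpos k hk) (by linarith)
  set S : Set ℕ := {k : ℕ | 1 ≤ k ∧ 0 < |lam n - lam k| ∧ |lam n - lam k| ≤ ρ} with hSdef
  have hCF : countingFn lam n ρ = S.ncard := rfl
  have hnS : n ∉ S := by
    intro h
    simp only [hSdef, Set.mem_setOf_eq, sub_self, abs_zero] at h
    exact lt_irrefl 0 h.2.1
  -- upper bound: any k ∈ S satisfies k ≤ n + s/γmin'
  have hUP : ∀ k ∈ S, (k : ℝ) ≤ n + s / γmin' := by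
    intro k hk
    obtain ⟨hk1, -, habs⟩ := hk
    rcases le_or_gt k n with h' | h'
    · have : (k : ℝ) ≤ n := by exact_mod_cast h'
      have : 0 ≤ s / γmin' := le_of_lt (div_pos hs hγ')
      linarith
    · have hlt : lam n < lam k := hmono n k hn1 h'
      have habs' : lam k - lam n ≤ ρ := by
        rw [abs_sub_comm, abs_of_pos (by linarith)] at habs
        exact habs
      have h1 : μ k ≤ μ n + Real.sqrt (lam k - lam n) := key n k hn1 hlt.le
      have h2 : Real.sqrt (lam k - lam n) ≤ s := Real.sqrt_le_sqrt habs'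
      have h3 : ((k : ℝ) - n) * γmin' ≤ μ k - μ n := gapB n k hn.le h'.le
      have : ((k : ℝ) - n) * γmin' ≤ s := by linarith
      rw [← le_div_iff₀ hγ'] at this
      linarith
  -- helper: for k ∈ S with k < n we have lam n - lam k ≤ ρ and μ n - μ k ≤ √(lam n - lam k)
  have hLOWdata : ∀ k ∈ S, k < n →
      lam n - lam k ≤ ρ ∧ μ n - μ k ≤ Real.sqrt (lam n - lam k) := by
    intro k hk hkn
    obtain ⟨hk1, -, habs⟩ := hk
    have hlt : lam k < lam n := hmono k n hk1 hkn
    have habs' : lam n - lam k ≤ ρ := by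
      rw [abs_of_pos (by linarith)] at habs
      exact habs
    exact ⟨habs', by linarith [key k n hk1 hlt.le]⟩
  refine ⟨?_, ?_, ?_⟩
  · -- Case 1 : ρ ≤ lam n - lam Ns
    intro hcase
    have hLOW : ∀ k ∈ S, (n : ℝ) - s / γmin' ≤ k := by
      intro k hk
      rcases le_or_gt n k with h' | h'
      · have : (n : ℝ) ≤ k := by exact_mod_cast h'
        have : 0 ≤ s / γmin' := le_of_lt (div_pos hs hγ')
        linarith
      · obtain ⟨habs', hμb⟩ := hLOWdata k hk h'
        obtain ⟨hk1, -, -⟩ := hk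
        have hkNs : Ns ≤ k := by
          by_contra hc
          push_neg at hc
          have := hmono k Ns hk1 hc
          linarith
        have h3 : ((n : ℝ) - k) * γmin' ≤ μ n - μ k := gapB k n hkNs h'.le
        have h2 : Real.sqrt (lam n - lam k) ≤ s := Real.sqrt_le_sqrt habs'
        have : ((n : ℝ) - k) * γmin' ≤ s := by linarith
        rw [← le_div_iff₀ hγ'] at this
        linarith
    have := ncard_le_of_bounds n S (s / γmin') (s / γmin')
      (le_of_lt (div_pos hs hγ')) (le_of_lt (div_pos hs hγ')) hnS
      (fun k hk => ⟨hLOW k hk, hUP k hk⟩)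
    rw [hCF]
    have e : 2 * s / γmin' = s / γmin' + s / γmin' := by ring
    linarith [e ▸ this]
  · -- Case 2 : lam n - lam Ns ≤ ρ ≤ lam n
    intro hcase1 hcase2
    have hLOW : ∀ k ∈ S, (n : ℝ) - s / γmin ≤ k := by
      intro k hk
      rcases le_or_gt n k with h' | h'
      · have : (n : ℝ) ≤ k := by exact_mod_cast h'
        have : 0 ≤ s / γmin := le_of_lt (div_pos hs hγ)
        linarith
      · obtain ⟨habs', hμb⟩ := hLOWdata k hk h'
        obtain ⟨hk1, -, -⟩ := hk
        have h3 : ((n : ℝ) - k) * γmin ≤ μ n - μ k := gapA k n hk1 h'.le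
        have h2 : Real.sqrt (lam n - lam k) ≤ s := Real.sqrt_le_sqrt habs'
        have : ((n : ℝ) - k) * γmin ≤ s := by linarith
        rw [← le_div_iff₀ hγ] at this
        linarith
    have := ncard_le_of_bounds n S (s / γmin) (s / γmin')
      (le_of_lt (div_pos hs hγ)) (le_of_lt (div_pos hs hγ')) hnS
      (fun k hk => ⟨hLOW k hk, hUP k hk⟩)
    rw [hCF]
    linarith
  · -- Case 3 : lam n ≤ ρ
    intro hcase
    have hμns : μ n ≤ s := Real.sqrt_le_sqrt hcase
    have hNs1 : (1 : ℝ) ≤ (Ns : ℝ) := by exact_mod_cast hNs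
    have hM : 0 ≤ (1 - γmin / γmin') * ((Ns : ℝ) - 1) := by
      apply mul_nonneg
      · have : γmin / γmin' < 1 := (div_lt_one hγ').mpr hγγ
        linarith
      · linarith
    set M : ℝ := (1 - γmin / γmin') * ((Ns : ℝ) - 1) with hMdef
    have hLOW : ∀ k ∈ S, (n : ℝ) - (M + s / γmin') ≤ k := by
      intro k hk
      have hsγ : 0 ≤ s / γmin' := le_of_lt (div_pos hs hγ')
      rcases le_or_gt n k with h' | h'
      · have : (n : ℝ) ≤ k := by exact_mod_cast h'
        linarith
      · obtain ⟨hk1, -, -⟩ := hk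
        have hμk : μ n - μ k ≤ s := by linarith [hμnn k]
        have hgoal : ((n : ℝ) - k) * γmin' ≤ (γmin' - γmin) * ((Ns : ℝ) - 1) + s := by
          rcases le_or_gt Ns k with hkNs | hkNs
          · have h3 : ((n : ℝ) - k) * γmin' ≤ μ n - μ k := gapB k n hkNs h'.le
            have : 0 ≤ (γmin' - γmin) * ((Ns : ℝ) - 1) :=
              mul_nonneg (by linarith) (by linarith)
            linarith
          · have h1 : ((Ns : ℝ) - k) * γmin ≤ μ Ns - μ k := gapA k Ns hk1 hkNs.le
            have h2 : ((n : ℝ) - Ns) * γmin' ≤ μ n - μ Ns := gapB Ns n le_rfl hn.le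
            have hk1' : (1 : ℝ) ≤ (k : ℝ) := by exact_mod_cast hk1
            have hkNs' : (k : ℝ) ≤ (Ns : ℝ) := by exact_mod_cast hkNs.le
            have hp : ((Ns : ℝ) - k) * (γmin' - γmin) ≤ ((Ns : ℝ) - 1) * (γmin' - γmin) :=
              mul_le_mul_of_nonneg_right (by linarith) (by linarith)
            nlinarith
        have e : M + s / γmin' = ((γmin' - γmin) * ((Ns : ℝ) - 1) + s) / γmin' := by
          rw [hMdef]
          field_simp
        have h4 : (n : ℝ) - k ≤ ((γmin' - γmin) * ((Ns : ℝ) - 1) + s) / γmin' :=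
          (le_div_iff₀ hγ').mpr hgoal
        rw [e]
        linarith
    have := ncard_le_of_bounds n S (M + s / γmin') (s / γmin')
      (by positivity) (le_of_lt (div_pos hs hγ')) hnS
      (fun k hk => ⟨hLOW k hk, hUP k hk⟩)
    rw [hCF]
    have e : M + 2 * s / γmin' = M + s / γmin' + s / γmin' := by ring
    linarith
end

section
/- There exists a constant θ_2 > 0, independent of N' and T', such that for every real T' > 0, every integer N' ≥ 1, and every real x ≥ 0, the value P_{N',T'}(ix) is a positive real number and P_{N',T'}(ix) ≥ e^{−θ_2 √(C_{N',T'} x)}. -/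
/-- `C_{N',T'} = T' / (2 Σ_{k=N'}^∞ 1/k²)`. -/
noncomputable def CNT (N' : ℕ) (T' : ℝ) : ℝ :=
  T' / (2 * ∑' j : ℕ, 1 / ((j + N' : ℕ) : ℝ) ^ 2)

/-- The mollifier `P_{N',T'}(z) = e^{izT'/2} ∏_{k=N'}^∞ cos (a_k z)` with
`a_k = C_{N',T'}/k²`. -/
noncomputable def PNT (N' : ℕ) (T' : ℝ) (z : ℂ) : ℂ :=
  Complex.exp (Complex.I * z * (T' / 2)) *
    ∏' j : ℕ, Complex.cos ((CNT N' T' / ((j + N' : ℕ) : ℝ) ^ 2 : ℝ) * z)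

/-!
On the imaginary axis the factors become real: `P(ix) = e^{-xT'/2} ∏ cosh (y_k)` with
`y_k = C x / k²`, and `∑ y_k = xT'/2` by the choice of `C`. Hence
`log P(ix) = ∑ (log cosh y_k - y_k) ≥ -∑ min (y_k, 1)`, because `cosh y ≥ max (1, e^y / 2)`.
Finally `∑_k min (t / k², 1) ≤ 3 √t`: the `⌊√t⌋` terms before the cut-off are at most `1`,
and the tail beyond it is at most `2t / (⌊√t⌋ + 1) ≤ 2 √t`. So `θ₂ = 3` works.
-/

open Real Finset

lemma log_cosh_le_abs (y : ℝ) : log (cosh y) ≤ |y| := by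
  rw [← cosh_abs, log_le_iff_le_exp (cosh_pos _), cosh_eq]
  linarith [exp_le_exp.2 (neg_le_self (abs_nonneg y))]

lemma sub_min_one_le_log_cosh (y : ℝ) : y - min y 1 ≤ log (cosh y) := by
  rcases le_total y 1 with h | h
  · rw [min_eq_left h, sub_self]
    exact log_nonneg (one_le_cosh y)
  · have hcosh : exp y / 2 ≤ cosh y := by
      rw [cosh_eq]
      linarith [exp_pos (-y)]
    calc y - min y 1 ≤ y - log 2 := by rw [min_eq_right h]; linarith [log_two_lt_d9]
      _ = log (exp y / 2) := by rw [log_div (exp_ne_zero _) two_ne_zero, log_exp]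
      _ ≤ log (cosh y) := log_le_log (by positivity) hcosh

lemma abs_min_one_le_abs (y : ℝ) : |min y 1| ≤ |y| := by
  rcases le_total y 1 with h | h
  · rw [min_eq_left h]
  · rw [min_eq_right h, abs_one, abs_of_nonneg (zero_le_one.trans h)]
    exact h

section

variable {ι : Type*} {y : ι → ℝ}

lemma Summable.min_one (hy : Summable y) : Summable fun i => min (y i) 1 :=
  .of_norm_bounded hy.abs fun i => abs_min_one_le_abs (y i)

lemma summable_log_cosh (hy : Summable y) : Summable fun i => log (cosh (y i)) :=
  .of_nonneg_of_le (fun _ => log_nonneg (one_le_cosh _)) (fun i => log_cosh_le_abs (y i)) hy.abs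

lemma hasProd_cosh (hy : Summable y) :
    HasProd (fun i => cosh (y i)) (exp (∑' i, log (cosh (y i)))) := by
  simpa [Function.comp_def, exp_log (cosh_pos _)] using (summable_log_cosh hy).hasSum.rexp

lemma tsum_sub_tsum_min_one_le_tsum_log_cosh (hy : Summable y) :
    ∑' i, y i - ∑' i, min (y i) 1 ≤ ∑' i, log (cosh (y i)) := by
  rw [← hy.tsum_sub hy.min_one]
  exact (hy.sub hy.min_one).tsum_le_tsum (fun i => sub_min_one_le_log_cosh (y i))
    (summable_log_cosh hy)

end

lemma summable_div_nat_add_sq (t : ℝ) (N : ℕ) :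
    Summable fun j : ℕ => t / ((j + N : ℕ) : ℝ) ^ 2 := by
  simpa [div_eq_mul_inv] using
    ((summable_nat_add_iff N).2 (summable_one_div_nat_pow.2 one_lt_two)).mul_left t

lemma tsum_one_div_nat_add_sq_le (M : ℕ) :
    ∑' j : ℕ, 1 / ((j + (M + 1) : ℕ) : ℝ) ^ 2 ≤ 2 / ((M : ℝ) + 1) := by
  refine tsum_le_of_sum_range_le (fun _ => by positivity) fun n => ?_
  calc ∑ j ∈ range n, 1 / ((j + (M + 1) : ℕ) : ℝ) ^ 2
      = ∑ i ∈ Ioo M (n + M + 1), ((i : ℝ) ^ 2)⁻¹ := by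
        rw [← Ico_add_one_left_eq_Ioo, sum_Ico_eq_sum_range,
          show n + M + 1 - (M + 1) = n by omega]
        simp [add_comm]
    _ ≤ 2 / ((M : ℝ) + 1) := sum_Ioo_inv_sq_le M _

lemma tsum_min_div_sq_le {t : ℝ} (ht : 0 ≤ t) :
    ∑' k : ℕ, min (t / ((k + 1 : ℕ) : ℝ) ^ 2) 1 ≤ 3 * √t := by
  obtain ⟨M, hM_le, hM_lt⟩ : ∃ M : ℕ, (M : ℝ) ≤ √t ∧ √t < M + 1 :=
    ⟨⌊√t⌋₊, Nat.floor_le (sqrt_nonneg t), Nat.lt_floor_add_one _⟩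
  have head : ∑ k ∈ range M, min (t / ((k + 1 : ℕ) : ℝ) ^ 2) 1 ≤ √t :=
    calc _ ≤ ∑ k ∈ range M, (1 : ℝ) := sum_le_sum fun _ _ => min_le_right _ _
      _ ≤ √t := by simpa using hM_le
  have tail : ∑' j : ℕ, min (t / ((j + M + 1 : ℕ) : ℝ) ^ 2) 1 ≤ 2 * √t :=
    calc _ ≤ ∑' j : ℕ, t / ((j + (M + 1) : ℕ) : ℝ) ^ 2 :=
          (summable_div_nat_add_sq t (M + 1)).min_one.tsum_le_tsum (fun _ => min_le_left _ _)
            (summable_div_nat_add_sq t (M + 1))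
      _ = t * ∑' j : ℕ, 1 / ((j + (M + 1) : ℕ) : ℝ) ^ 2 := by
          rw [← tsum_mul_left]
          simp [div_eq_mul_inv]
      _ ≤ t * (2 / ((M : ℝ) + 1)) := by gcongr; exact tsum_one_div_nat_add_sq_le M
      _ ≤ 2 * √t := by
          rw [mul_div_assoc', div_le_iff₀ (by positivity)]
          nlinarith [mul_self_sqrt ht, sqrt_nonneg t]
  rw [← (summable_div_nat_add_sq t 1).min_one.sum_add_tsum_nat_add M]
  linarith

lemma tsum_min_div_nat_add_sq_le {N : ℕ} (hN : 1 ≤ N) {t : ℝ} (ht : 0 ≤ t) :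
    ∑' j : ℕ, min (t / ((j + N : ℕ) : ℝ) ^ 2) 1 ≤ 3 * √t := by
  calc _ ≤ ∑' j : ℕ, min (t / ((j + 1 : ℕ) : ℝ) ^ 2) 1 :=
        (summable_div_nat_add_sq t N).min_one.tsum_le_tsum (fun _ => by gcongr)
          (summable_div_nat_add_sq t 1).min_one
    _ ≤ 3 * √t := tsum_min_div_sq_le ht

lemma CNT_nonneg (N : ℕ) {T : ℝ} (hT : 0 ≤ T) : 0 ≤ CNT N T := by
  unfold CNT
  have : 0 ≤ ∑' j : ℕ, 1 / ((j + N : ℕ) : ℝ) ^ 2 := tsum_nonneg fun _ => by positivity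
  positivity

lemma tsum_CNT_mul_div_nat_add_sq {N : ℕ} (hN : 1 ≤ N) (T x : ℝ) :
    ∑' j : ℕ, CNT N T * x / ((j + N : ℕ) : ℝ) ^ 2 = x * T / 2 := by
  have hpos : 0 < ∑' j : ℕ, 1 / ((j + N : ℕ) : ℝ) ^ 2 :=
    (summable_div_nat_add_sq 1 N).tsum_pos (fun _ => by positivity) 0 (by positivity)
  simp_rw [div_eq_mul_one_div (CNT N T * x), tsum_mul_left, CNT]
  field_simp

lemma PNT_I_mul (N : ℕ) (T x : ℝ) :
    PNT N T (Complex.I * x) = ↑(exp (-(x * T / 2)) *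
      exp (∑' j : ℕ, log (cosh (CNT N T * x / ((j + N : ℕ) : ℝ) ^ 2)))) := by
  have hprod := (hasProd_cosh (summable_div_nat_add_sq (CNT N T * x) N)).map Complex.ofRealHom
    Complex.continuous_ofReal
  have hcos (j : ℕ) : Complex.cos ((CNT N T / ((j + N : ℕ) : ℝ) ^ 2 : ℝ) * (Complex.I * x)) =
      ↑(cosh (CNT N T * x / ((j + N : ℕ) : ℝ) ^ 2)) := by
    rw [Complex.ofReal_cosh, ← Complex.cos_mul_I]
    push_cast
    ring_nf
  have hexp : Complex.exp (Complex.I * (Complex.I * x) * (T / 2)) = ↑(exp (-(x * T / 2))) := by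
    rw [Complex.ofReal_exp]
    push_cast
    ring_nf
    rw [Complex.I_sq]
    ring_nf
  rw [PNT, hexp, funext hcos, Complex.ofReal_mul]
  exact congrArg _ hprod.tprod_eq

theorem mollifier_lower_bound_imaginary_axis :
    ∃ θ₂ > (0:ℝ),
      ∀ T' : ℝ, 0 < T' → ∀ N' : ℕ, 1 ≤ N' → ∀ x : ℝ, 0 ≤ x →
        (PNT N' T' (Complex.I * (x : ℂ))).im = 0 ∧
        0 < (PNT N' T' (Complex.I * (x : ℂ))).re ∧
        Real.exp (-θ₂ * Real.sqrt (CNT N' T' * x)) ≤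
          (PNT N' T' (Complex.I * (x : ℂ))).re := by
  refine ⟨3, by norm_num, fun T' hT N' hN x hx => ?_⟩
  have hy := summable_div_nat_add_sq (CNT N' T' * x) N'
  have hlog := tsum_sub_tsum_min_one_le_tsum_log_cosh hy
  have hmin := tsum_min_div_nat_add_sq_le hN (mul_nonneg (CNT_nonneg N' hT.le) hx)
  rw [tsum_CNT_mul_div_nat_add_sq hN] at hlog
  rw [PNT_I_mul, ← exp_add, Complex.ofReal_re, Complex.ofReal_im]
  exact ⟨rfl, exp_pos _, exp_le_exp.2 (by linarith)⟩
end
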